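/- Let (X,r) be a finite non-degenerate solution of the set-theoretic Yang–Baxter equation. If the Lie algebra 𝔤(X,r) ⊆ 𝔤𝔩(V) generated by the operators {L_{[x]} ∘ p_{[y]}, R_{[x]} ∘ p_{[y]}} is abelian, then the retraction Ret(X,r) is the trivial (flip) solution, i.e., the induced left and right actions on X/∼ are trivial. -/

import Mathlib

/-- `r × id` on `X × X × X`. -/
def r1 {X : Type*} (r : X × X → X × X) : X × X × X → X × X × X :=
  fun p => ((r (p.1, p.2.1)).1, (r (p.1, p.2.1)).2, p.2.2)

/-- `id × r` on `X × X × X`. -/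
def r2 {X : Type*} (r : X × X → X × X) : X × X × X → X × X × X :=
  fun p => (p.1, r (p.2.1, p.2.2))

/-- The set-theoretic Yang–Baxter (braid) equation. -/
def IsYBE {X : Type*} (r : X × X → X × X) : Prop :=
  r1 r ∘ r2 r ∘ r1 r = r2 r ∘ r1 r ∘ r2 r

/-- Left translation `L_x`. -/
def Lmap {X : Type*} (r : X × X → X × X) (x y : X) : X := (r (x, y)).1

/-- Right translation `R_y`. -/
def Rmap {X : Type*} (r : X × X → X × X) (y x : X) : X := (r (x, y)).2

/-- The retract setoid: `x ∼ y` iff `L_x = L_y` and `R_x = R_y`. -/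
def retSetoid {X : Type*} (r : X × X → X × X) : Setoid X :=
  ⟨fun a b => Lmap r a = Lmap r b ∧ Rmap r a = Rmap r b,
    ⟨fun _ => ⟨rfl, rfl⟩, fun h => ⟨h.1.symm, h.2.symm⟩,
      fun h h' => ⟨h.1.trans h'.1, h.2.trans h'.2⟩⟩⟩

/-- The linear extension of `L_x` to `V = ℂ^X`, sending `e_y ↦ e_{L_x y}`. -/
noncomputable def Lop {X : Type*} (r : X × X → X × X) (x : X) :
    (X →₀ ℂ) →ₗ[ℂ] (X →₀ ℂ) :=
  Finsupp.lmapDomain ℂ ℂ (Lmap r x)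

/-- The linear extension of `R_y` to `V = ℂ^X`, sending `e_x ↦ e_{R_y x}`. -/
noncomputable def Rop {X : Type*} (r : X × X → X × X) (y : X) :
    (X →₀ ℂ) →ₗ[ℂ] (X →₀ ℂ) :=
  Finsupp.lmapDomain ℂ ℂ (Rmap r y)

open Classical in
/-- The projection onto the span of the `∼`-class of `z`. -/
noncomputable def pcl {X : Type*} [Fintype X] (r : X × X → X × X) (z : X) :
    (X →₀ ℂ) →ₗ[ℂ] (X →₀ ℂ) :=
  ∑ w : X, if (retSetoid r).r w z then Finsupp.lsingle w ∘ₗ Finsupp.lapply w else 0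

/-- Generators of the Lie algebra `𝔤(X,r)`: the operators
`L_{[x]} ∘ p_{[y]}` and `R_{[x]} ∘ p_{[y]}`. -/
def lieGens {X : Type*} [Fintype X] (r : X × X → X × X) :
    Set (Module.End ℂ (X →₀ ℂ)) :=
  {T | ∃ x y : X, T = Lop r x ∘ₗ pcl r y ∨ T = Rop r x ∘ₗ pcl r y}

attribute [local instance 100] LieRing.ofAssociativeRing

/-!
If `y ≁ f y` for `f = L_x` (or `f = R_y`), then the two generators `f ∘ p_{[y]}` and
`f ∘ p_{[f y]}` do not commute: on `e_y` one order of composition gives `e_{f (f y)}`, the other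
`0`, because `p_{[f y]} e_y = 0`. Hence an abelian `𝔤(X,r)` forces every class to be fixed by
the induced actions.
-/

theorem LieSubalgebra.lie_eq_zero_of_mem_of_isLieAbelian_lieSpan {R L : Type*} [CommRing R]
    [LieRing L] [LieAlgebra R L] {s : Set L} (habelian : IsLieAbelian (lieSpan R L s))
    {a b : L} (ha : a ∈ s) (hb : b ∈ s) : ⁅a, b⁆ = 0 :=
  congrArg Subtype.val
    (trivial_lie_zero (lieSpan R L s) (lieSpan R L s) ⟨a, subset_lieSpan ha⟩
      ⟨b, subset_lieSpan hb⟩)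

theorem commute_of_mem_lieGens {X : Type*} [Fintype X] {r : X × X → X × X}
    (habelian : IsLieAbelian
      (LieSubalgebra.lieSpan ℂ (Module.End ℂ (X →₀ ℂ)) (lieGens r)))
    {A B : Module.End ℂ (X →₀ ℂ)} (hA : A ∈ lieGens r) (hB : B ∈ lieGens r) : Commute A B :=
  sub_eq_zero.mp <| (Ring.lie_def A B).symm.trans <|
    LieSubalgebra.lie_eq_zero_of_mem_of_isLieAbelian_lieSpan habelian hA hB

section Projection

variable {X : Type*} [Fintype X] (r : X × X → X × X)

open Classical in
theorem pcl_single (z w : X) :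
    pcl r z (Finsupp.single w 1) =
      if (retSetoid r).r w z then Finsupp.single w (1 : ℂ) else 0 := by
  rw [pcl, LinearMap.sum_apply, Finset.sum_eq_single w]
  · by_cases hw : (retSetoid r).r w z <;> simp [hw]
  · intro b _ hb
    by_cases hb' : (retSetoid r).r b z <;> simp [hb', Ne.symm hb]
  · simp

theorem pcl_single_self (z : X) : pcl r z (Finsupp.single z 1) = Finsupp.single z 1 := by
  rw [pcl_single, if_pos ((retSetoid r).refl z)]

theorem pcl_single_of_not_rel {z w : X} (hwz : ¬ (retSetoid r).r w z) :
    pcl r z (Finsupp.single w 1) = 0 := by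
  rw [pcl_single, if_neg hwz]

theorem rel_apply_of_commute {f : X → X} {y : X}
    (hcomm : Commute (Finsupp.lmapDomain ℂ ℂ f ∘ₗ pcl r y)
      (Finsupp.lmapDomain ℂ ℂ f ∘ₗ pcl r (f y))) :
    (retSetoid r).r (f y) y := by
  by_contra hfy
  have hy : ¬ (retSetoid r).r y (f y) := fun h => hfy ((retSetoid r).symm h)
  have h := LinearMap.congr_fun hcomm.eq (Finsupp.single y 1)
  simp only [Module.End.mul_apply, LinearMap.comp_apply, pcl_single_of_not_rel r hy,
    pcl_single_self, map_zero, Finsupp.lmapDomain_apply, Finsupp.mapDomain_single] at h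
  exact one_ne_zero (Finsupp.single_eq_zero.mp h.symm)

end Projection

theorem stmt14_general {X : Type*} [Fintype X] (r : X × X → X × X)
    (habelian : IsLieAbelian
      (LieSubalgebra.lieSpan ℂ (Module.End ℂ (X →₀ ℂ)) (lieGens r))) :
    ∀ x y : X, (retSetoid r).r (Lmap r x y) y ∧ (retSetoid r).r (Rmap r y x) x := by
  intro x y
  exact ⟨rel_apply_of_commute r
      (commute_of_mem_lieGens habelian ⟨x, y, .inl rfl⟩ ⟨x, Lmap r x y, .inl rfl⟩),
    rel_apply_of_commute r
      (commute_of_mem_lieGens habelian ⟨y, x, .inr rfl⟩ ⟨y, Rmap r y x, .inr rfl⟩)⟩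

theorem stmt14 {X : Type*} [Fintype X] (r : X × X → X × X) (h : IsYBE r)
    (hL : ∀ x : X, Function.Bijective (Lmap r x))
    (hR : ∀ y : X, Function.Bijective (Rmap r y))
    (habelian : IsLieAbelian
      (LieSubalgebra.lieSpan ℂ (Module.End ℂ (X →₀ ℂ)) (lieGens r))) :
    ∀ x y : X, (retSetoid r).r (Lmap r x y) y ∧ (retSetoid r).r (Rmap r y x) x :=
  stmt14_general r habelian
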